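/- arXiv:1612.04654 — 2 statements merged into one kernel-verified Lean document; each statement's English description precedes it below -/
import Mathlib

section
/- Fix positive constants c₁, c₂, c₃, c₄, and P_max, and define f(P_S, P_R) = c₁·P_R/P_S + c₂/P_S + c₃·P_S/P_R + c₄/P_R on (0, P_max] × (0, ∞). Then f attains its minimum at P_S = P_max and P_R = √((P_max/c₁)·(c₃ P_max + c₄)). -/
/-!
For fixed `P_S`, the cost is `c₂ / P_S + (c₁ / P_S) P_R + (c₃ P_S + c₄) / P_R`, and by AM-GM the
last two terms are at least `2 √((c₁ / P_S)(c₃ P_S + c₄)) = 2 √(c₁ c₃ + c₁ c₄ / P_S)`, with equality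
at `P_R = √((c₃ P_S + c₄) / (c₁ / P_S))`. Both this bound and `c₂ / P_S` decrease in `P_S`, so the
minimum sits on the boundary `P_S = P_max`.
-/

open Real

lemma two_sqrt_mul_le_add {u v : ℝ} (hu : 0 ≤ u) (hv : 0 ≤ v) : 2 * √(u * v) ≤ u + v := by
  rw [sqrt_mul hu, ← mul_assoc]
  simpa only [sq_sqrt hu, sq_sqrt hv] using two_mul_le_add_sq (√u) (√v)

lemma two_sqrt_mul_le_mul_add_div {a b x : ℝ} (ha : 0 ≤ a) (hb : 0 ≤ b) (hx : 0 < x) :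
    2 * √(a * b) ≤ a * x + b / x := by
  have hprod : a * x * (b / x) = a * b := by field_simp
  simpa only [hprod] using two_sqrt_mul_le_add (by positivity : 0 ≤ a * x) (by positivity : 0 ≤ b / x)

lemma mul_sqrt_div_add_div_sqrt_div {a b : ℝ} (ha : 0 < a) (hb : 0 < b) :
    a * √(b / a) + b / √(b / a) = 2 * √(a * b) := by
  have hsa : 0 < √a := sqrt_pos.mpr ha
  have hsb : 0 < √b := sqrt_pos.mpr hb
  rw [sqrt_div' b ha.le, sqrt_mul ha.le]
  field_simp
  rw [sq_sqrt ha.le, sq_sqrt hb.le]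
  ring

lemma div_mul_add_antitone {a b c y z : ℝ} (ha : 0 ≤ a) (hc : 0 ≤ c) (hy : 0 < y)
    (hyz : y ≤ z) : a / z * (b * z + c) ≤ a / y * (b * y + c) := by
  have hz : 0 < z := hy.trans_le hyz
  have expand : ∀ t : ℝ, 0 < t → a / t * (b * t + c) = a * b + a * c / t := fun t ht => by
    field_simp
  rw [expand z hz, expand y hy]
  gcongr

/-- For positive c₁, c₂, c₃, c₄, P_max, the function
    f(P_S, P_R) = c₁P_R/P_S + c₂/P_S + c₃P_S/P_R + c₄/P_R on (0,P_max]×(0,∞)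
    attains its minimum at P_S = P_max, P_R = √((P_max/c₁)(c₃P_max + c₄)). -/
theorem stmt_13 (c₁ c₂ c₃ c₄ Pmax : ℝ) (h1 : 0 < c₁) (h2 : 0 < c₂)
    (h3 : 0 < c₃) (h4 : 0 < c₄) (hP : 0 < Pmax) :
    ∀ PS PR : ℝ, 0 < PS → PS ≤ Pmax → 0 < PR →
      c₁ * Real.sqrt ((Pmax / c₁) * (c₃ * Pmax + c₄)) / Pmax + c₂ / Pmax +
          c₃ * Pmax / Real.sqrt ((Pmax / c₁) * (c₃ * Pmax + c₄)) +
          c₄ / Real.sqrt ((Pmax / c₁) * (c₃ * Pmax + c₄)) ≤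
        c₁ * PR / PS + c₂ / PS + c₃ * PS / PR + c₄ / PR := by
  intro PS PR hPS hPSle hPR
  set A := c₃ * Pmax + c₄
  have hA : 0 < A := by positivity
  have hopt : Pmax / c₁ * A = A / (c₁ / Pmax) := by field_simp
  rw [hopt]
  calc _ = c₁ / Pmax * √(A / (c₁ / Pmax)) + A / √(A / (c₁ / Pmax)) + c₂ / Pmax := by ring
    _ = 2 * √(c₁ / Pmax * A) + c₂ / Pmax := by
      rw [mul_sqrt_div_add_div_sqrt_div (by positivity) hA]
    _ ≤ 2 * √(c₁ / PS * (c₃ * PS + c₄)) + c₂ / PS := by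
      gcongr 2 * √?_ + ?_
      · exact div_mul_add_antitone h1.le h4.le hPS hPSle
      · exact div_le_div_of_nonneg_left h2.le hPS hPSle
    _ ≤ c₁ / PS * PR + (c₃ * PS + c₄) / PR + c₂ / PS := by
      gcongr
      exact two_sqrt_mul_le_mul_add_div (by positivity) (by positivity) hPR
    _ = _ := by ring
end

section
/- Let γ̂_{k,i} > 0 for k = 1,…,n be the iterates of an algorithm where, with ν_{k,i} = γ̂_{k,i}/(1+γ̂_{k,i}) and λ_{k,i} = γ̂_{k,i}^{−ν_{k,i}}(1+γ̂_{k,i}), the next iterate (γ̂_{1,i+1},…,γ̂_{n,i+1}) maximizes Π_k λ_{k,i} γ_k^{ν_{k,i}} over a feasible set containing (γ̂_{1,i},…,γ̂_{n,i}). Then Π_k (1+γ̂_{k,i}) ≤ Π_k (1+γ̂_{k,i+1}). -/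
/-!
The surrogate `λ γ^ν`, with `ν = γ̂/(1+γ̂)` and `λ = γ̂^(-ν)(1+γ̂)`, touches `1 + γ` at `γ = γ̂` and
lies below it everywhere else, by weighted AM-GM applied to `γ/γ̂` and `1` with weights `ν`, `1 - ν`.
Hence `Π(1+γ̂) = Π λ γ̂^ν ≤ Π λ γ'^ν ≤ Π(1+γ')`, the middle step being the optimality of `γ'`.
-/

open Finset

namespace Real

lemma rpow_neg_mul_mul_rpow_self {a : ℝ} (ha : 0 < a) (ν c : ℝ) :
    a ^ (-ν) * c * a ^ ν = c := by
  rw [rpow_neg ha.le, mul_comm _ c, mul_assoc, inv_mul_cancel₀ (rpow_pos_of_pos ha ν).ne',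
    mul_one]

lemma div_rpow_le_one_add_div_one_add {a b : ℝ} (ha : 0 < a) (hb : 0 ≤ b) :
    (b / a) ^ (a / (1 + a)) ≤ (1 + b) / (1 + a) := by
  have ha₁ : 0 < 1 + a := by linarith
  have hν₀ : 0 ≤ a / (1 + a) := by positivity
  have hν₁ : 0 ≤ 1 - a / (1 + a) := by rw [sub_nonneg, div_le_one ha₁]; linarith
  calc (b / a) ^ (a / (1 + a))
      = (b / a) ^ (a / (1 + a)) * 1 ^ (1 - a / (1 + a)) := by rw [one_rpow, mul_one]
    _ ≤ a / (1 + a) * (b / a) + (1 - a / (1 + a)) * 1 :=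
        geom_mean_le_arith_mean2_weighted hν₀ hν₁ (by positivity) zero_le_one (by ring)
    _ = (1 + b) / (1 + a) := by field_simp; ring

lemma rpow_neg_mul_one_add_mul_rpow_le {a b : ℝ} (ha : 0 < a) (hb : 0 ≤ b) :
    a ^ (-(a / (1 + a))) * (1 + a) * b ^ (a / (1 + a)) ≤ 1 + b := by
  have ha₁ : 0 < 1 + a := by linarith
  calc a ^ (-(a / (1 + a))) * (1 + a) * b ^ (a / (1 + a))
      = (b / a) ^ (a / (1 + a)) * (1 + a) := by
        rw [div_rpow hb ha.le, rpow_neg ha.le]; ring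
    _ ≤ (1 + b) / (1 + a) * (1 + a) := by
        gcongr; exact div_rpow_le_one_add_div_one_add ha hb
    _ = 1 + b := div_mul_cancel₀ _ ha₁.ne'

end Real

/-- Monotone improvement of the successive-approximation GP algorithm: if the
    next iterate γ' maximizes the monomial surrogate Π_k λ_k γ_k^{ν_k}
    (built at the current positive iterate γ̂) over a feasible set S of
    positive points containing γ̂, then Π_k(1+γ̂_k) ≤ Π_k(1+γ'_k). -/
theorem stmt_16 (n : ℕ) (γhat γnext : Fin n → ℝ) (S : Set (Fin n → ℝ))
    (hpos : ∀ k, 0 < γhat k) (hSpos : ∀ γ ∈ S, ∀ k, 0 < γ k)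
    (hmem : γhat ∈ S) (hnextS : γnext ∈ S)
    (hmax : ∀ γ ∈ S,
      ∏ k, (γhat k ^ (-(γhat k / (1 + γhat k))) * (1 + γhat k)) *
          γ k ^ (γhat k / (1 + γhat k)) ≤
        ∏ k, (γhat k ^ (-(γhat k / (1 + γhat k))) * (1 + γhat k)) *
          γnext k ^ (γhat k / (1 + γhat k))) :
    ∏ k, (1 + γhat k) ≤ ∏ k, (1 + γnext k) := by
  have hnext : ∀ k, 0 ≤ γnext k := fun k => (hSpos γnext hnextS k).le
  calc ∏ k, (1 + γhat k)
      = ∏ k, (γhat k ^ (-(γhat k / (1 + γhat k))) * (1 + γhat k)) *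
          γhat k ^ (γhat k / (1 + γhat k)) :=
        prod_congr rfl fun k _ => (Real.rpow_neg_mul_mul_rpow_self (hpos k) _ _).symm
    _ ≤ ∏ k, (γhat k ^ (-(γhat k / (1 + γhat k))) * (1 + γhat k)) *
          γnext k ^ (γhat k / (1 + γhat k)) := hmax γhat hmem
    _ ≤ ∏ k, (1 + γnext k) :=
        prod_le_prod (fun k _ => by have := hpos k; have := hnext k; positivity)
          fun k _ => Real.rpow_neg_mul_one_add_mul_rpow_le (hpos k) (hnext k)
end
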